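/- The map T : ℝ² → ℝ² defined by T(p,y) = (y+1, y²+2) is not pseudomonotone on [1,5] × [-1,1], even though g(y) = y+1 is affine and G(y) = {y²+2} is pseudomonotone on ℝ. Specifically, at the points (p₁,y₁) = (5,-1) and (p₂,y₂) = (1,1), one has ⟨T(p₁,y₁), (p₂,y₂) - (p₁,y₁)⟩ ≥ 0 but ⟨T(p₂,y₂), (p₂,y₂) - (p₁,y₁)⟩ < 0. -/

import Mathlib

/-! At `u = (5,-1)` the first component `y + 1` of `T u` vanishes, so the large negative
displacement `-4` in `p` towards `v = (1,1)` is invisible there and `⟨T u, v - u⟩ = 6`; at `v`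
it carries weight `2` and gives `⟨T v, v - u⟩ = -8 + 6 = -2`. In one variable no such
cancellation is possible: a positive map `G` makes `G v * (w - v)` and `G w * (w - v)` share the
sign of `w - v`. -/

open RealInnerProductSpace

noncomputable def T7 : EuclideanSpace ℝ (Fin 2) → EuclideanSpace ℝ (Fin 2) := fun x =>
  WithLp.toLp 2 (fun i : Fin 2 => if i = 0 then x 1 + 1 else (x 1) ^ 2 + 2)

noncomputable def u7 : EuclideanSpace ℝ (Fin 2) := WithLp.toLp 2 (fun i : Fin 2 => if i = 0 then (5 : ℝ) else -1)

noncomputable def v7 : EuclideanSpace ℝ (Fin 2) := WithLp.toLp 2 (fun i : Fin 2 => if i = 0 then (1 : ℝ) else 1)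

lemma pseudomonotone_of_forall_pos {G : ℝ → ℝ} (hG : ∀ y, 0 < G y) {v w : ℝ}
    (h : G v * (w - v) ≥ 0) : G w * (w - v) ≥ 0 :=
  mul_nonneg (hG w).le (nonneg_of_mul_nonneg_right h (hG v))

lemma inner_T7 (u w : EuclideanSpace ℝ (Fin 2)) :
    ⟪T7 u, w⟫ = (u 1 + 1) * w 0 + (u 1 ^ 2 + 2) * w 1 := by
  simp only [T7, PiLp.inner_apply, RCLike.inner_apply, Real.ringHom_apply, Fin.sum_univ_two,
    Fin.isValue, ↓reduceIte, one_ne_zero]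
  ring

lemma inner_T7_u7_v7_sub_u7 : ⟪T7 u7, v7 - u7⟫ = 6 := by
  rw [inner_T7]
  norm_num [u7, v7]

lemma inner_T7_v7_v7_sub_u7 : ⟪T7 v7, v7 - u7⟫ = -2 := by
  rw [inner_T7]
  norm_num [u7, v7]

/-- `T(p,y) = (y+1, y²+2)` is not pseudomonotone on `[1,5] × [-1,1]`, even though `g(y) = y+1`
is affine and `G(y) = {y²+2}` is pseudomonotone on `ℝ`; the failure is witnessed at
`(5,-1)` and `(1,1)`. -/
theorem stmt_7 :
    (∃ a b : ℝ, ∀ y : ℝ, y + 1 = a * y + b) ∧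
    (∀ v w : ℝ, (v ^ 2 + 2) * (w - v) ≥ 0 → (w ^ 2 + 2) * (w - v) ≥ 0) ∧
    u7 0 ∈ Set.Icc (1 : ℝ) 5 ∧ u7 1 ∈ Set.Icc (-1 : ℝ) 1 ∧
    v7 0 ∈ Set.Icc (1 : ℝ) 5 ∧ v7 1 ∈ Set.Icc (-1 : ℝ) 1 ∧
    ⟪T7 u7, v7 - u7⟫ ≥ 0 ∧ ⟪T7 v7, v7 - u7⟫ < 0 ∧
    ¬ (∀ u : EuclideanSpace ℝ (Fin 2), u 0 ∈ Set.Icc (1 : ℝ) 5 → u 1 ∈ Set.Icc (-1 : ℝ) 1 →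
        ∀ v : EuclideanSpace ℝ (Fin 2), v 0 ∈ Set.Icc (1 : ℝ) 5 → v 1 ∈ Set.Icc (-1 : ℝ) 1 →
        ⟪T7 u, v - u⟫ ≥ 0 → ⟪T7 v, v - u⟫ ≥ 0) := by
  have hu0 : u7 0 ∈ Set.Icc (1 : ℝ) 5 := by norm_num [u7]
  have hu1 : u7 1 ∈ Set.Icc (-1 : ℝ) 1 := by norm_num [u7]
  have hv0 : v7 0 ∈ Set.Icc (1 : ℝ) 5 := by norm_num [v7]
  have hv1 : v7 1 ∈ Set.Icc (-1 : ℝ) 1 := by norm_num [v7]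
  have hu : ⟪T7 u7, v7 - u7⟫ ≥ 0 := by rw [inner_T7_u7_v7_sub_u7]; norm_num
  have hv : ⟪T7 v7, v7 - u7⟫ < 0 := by rw [inner_T7_v7_v7_sub_u7]; norm_num
  refine ⟨⟨1, 1, fun y => by ring⟩,
    fun v w => pseudomonotone_of_forall_pos (G := fun y => y ^ 2 + 2) (fun y => by positivity),
    hu0, hu1, hv0, hv1, hu, hv, fun h => ?_⟩
  exact (h u7 hu0 hu1 v7 hv0 hv1 hu).not_gt hv
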